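/- For every r ∈ ℕ: if r+1 is a triangular number, then u_{r − u_r} = u_r, and otherwise u_{r − u_r} = u_r − 1. -/
import Mathlib


variable {V : Type} [Fintype V] [DecidableEq V]

/-- The `k`-th triangular number `t_k = C(k+1,2)`. -/
def tri (k : ℕ) : ℕ := (k + 1).choose 2

/-- A natural number is triangular if it equals `t_k` for some `k`. -/
def IsTriangular (m : ℕ) : Prop := ∃ k, m = tri k

/-- `uval r = max {k : t_k ≤ r}`. -/
def uval (r : ℕ) : ℕ := Nat.findGreatest (fun k => tri k ≤ r) r

lemma tri_succ (k : ℕ) : tri (k + 1) = tri k + (k + 1) := by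
  simp [tri, Nat.choose_succ_succ (k+1) 1, Nat.choose_one_right]
  omega

lemma self_le_tri (k : ℕ) : k ≤ tri k := by
  induction k with
  | zero => simp [tri]
  | succ n ih => rw [tri_succ]; omega

lemma tri_mono {a b : ℕ} (h : a ≤ b) : tri a ≤ tri b :=
  Nat.choose_le_choose 2 (by omega)

lemma tri_uval_le (r : ℕ) : tri (uval r) ≤ r :=
  Nat.findGreatest_spec (P := fun k => tri k ≤ r) (Nat.zero_le r) (by norm_num [tri])

lemma lt_tri_uval_succ (r : ℕ) : r < tri (uval r + 1) := by
  by_cases h : uval r + 1 ≤ r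
  · by_contra hc
    exact Nat.findGreatest_is_greatest (P := fun k => tri k ≤ r) (k := uval r + 1)
      (by exact Nat.lt_succ_self _) h (by omega)
  · have := self_le_tri (uval r + 1); omega

lemma uval_eq {s k : ℕ} (h1 : tri k ≤ s) (h2 : s < tri (k + 1)) : uval s = k := by
  have hk : k ≤ uval s :=
    Nat.le_findGreatest (le_trans (self_le_tri k) h1) h1
  have : uval s ≤ k := by
    by_contra hc
    have := tri_mono (show k + 1 ≤ uval s by omega)
    have := tri_uval_le s
    omega
  omega

/-- If `r + 1` is triangular then `u_{r - u_r} = u_r`; otherwise `u_{r - u_r} = u_r - 1`. -/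
theorem stmt5 (r : ℕ) :
    (IsTriangular (r + 1) → uval (r - uval r) = uval r) ∧
    (¬ IsTriangular (r + 1) → uval (r - uval r) = uval r - 1) := by
  set u := uval r with hu
  have h1 : tri u ≤ r := tri_uval_le r
  have h2 : r < tri (u + 1) := lt_tri_uval_succ r
  have hsucc : tri (u + 1) = tri u + (u + 1) := tri_succ u
  have hle : u ≤ tri u := self_le_tri u
  constructor
  · intro ⟨m, hm⟩
    -- m must be u + 1
    have hmu : m = u + 1 := by
      have h3 : tri u < tri m := by omega
      have h4 : tri m ≤ tri (u + 1) := by omega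
      have hl : u < m := by
        by_contra hc; exact absurd (tri_mono (by omega : m ≤ u)) (by omega)
      have hr : m ≤ u + 1 := by
        by_contra hc
        have ha := tri_mono (show u + 1 + 1 ≤ m by omega)
        have hb := tri_succ (u + 1)
        omega
      omega
    subst hmu
    have : r - u = tri u := by omega
    rw [this]
    exact uval_eq le_rfl (by rw [tri_succ]; omega)
  · intro hnt
    have hne : r + 1 ≠ tri (u + 1) := fun h => hnt ⟨u + 1, h⟩
    have hlt : r - u < tri u := by omega
    have hu1 : 1 ≤ u := by
      by_contra hc
      have : u = 0 := by omega
      rw [this] at hlt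
      simp [tri] at hlt
    have hpred : tri (u - 1) + u = tri u := by
      have h := tri_succ (u - 1)
      rw [show u - 1 + 1 = u from by omega] at h
      omega
    have := uval_eq (s := r - u) (k := u - 1) (by omega)
      (by rw [show u - 1 + 1 = u from by omega]; omega)
    omega
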